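/- Let ρ₀, ρ₁ be Hermitian matrices with trace 1, p ∈ [0,1], and M₀, M₁ Hermitian with M₀ + M₁ = I. If equality holds in the bound p·Tr(ρ₀ M₁) + (1-p)·Tr(ρ₁ M₀) ≥ 1/2 - (1/2)‖p ρ₀ - (1-p) ρ₁‖₁ (λ_max(M₀) - λ_min(M₀)) - (1/2)(2p-1)(λ_max(M₀)+λ_min(M₀)-1), then Tr((p ρ₀ - (1-p) ρ₁)₊ (M₀ - λ_max(M₀) I)) = 0 and Tr((p ρ₀ - (1-p) ρ₁)₋ (M₀ - λ_min(M₀) I)) = 0, i.e., the range of the positive part of p ρ₀ - (1-p) ρ₁ lies in the λ_max(M₀)-eigenspace of M₀ and the range of the negative part lies in the λ_min(M₀)-eigenspace. -/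

import Mathlib

/-!
Write `Δ = p ρ₀ - (1 - p) ρ₁ = P + N`. Since `P ≥ 0`, `N ≤ 0` and `P N = 0`, the pair `(P, -N)`
is the positive/negative-part decomposition of `Δ`, so `|Δ| = P - N` and `‖Δ‖₁ = Tr P - Tr N`;
moreover `Tr P + Tr N = Tr Δ = 2p - 1`. With these two facts the difference between the two sides
of the bound becomes `Tr (P (λ_max - M₀)) + Tr (N (λ_min - M₀))`, a sum of two traces of products of
operators of equal sign, hence of two nonnegative numbers. Equality forces both to vanish.
-/

open Matrix BigOperators ComplexOrder

noncomputable def eigMax {d : ℕ} (M : Matrix (Fin d) (Fin d) ℂ) : ℝ :=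
  if h : M.IsHermitian then ⨆ i, h.eigenvalues i else 0

noncomputable def eigMin {d : ℕ} (M : Matrix (Fin d) (Fin d) ℂ) : ℝ :=
  if h : M.IsHermitian then ⨅ i, h.eigenvalues i else 0

/-- Trace norm of a Hermitian matrix: sum of absolute values of eigenvalues. -/
noncomputable def traceNorm {d : ℕ} (M : Matrix (Fin d) (Fin d) ℂ) : ℝ :=
  if h : M.IsHermitian then ∑ i, |h.eigenvalues i| else 0

/-- Real part of the trace. -/
noncomputable def reTr {d : ℕ} (M : Matrix (Fin d) (Fin d) ℂ) : ℝ := (M.trace).re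

/-- Frobenius norm. -/
noncomputable def frob {d : ℕ} (M : Matrix (Fin d) (Fin d) ℂ) : ℝ :=
  Real.sqrt (∑ i, ∑ j, ‖M i j‖ ^ 2)

namespace Matrix

variable {𝕜 n : Type*} [RCLike 𝕜] [Fintype n] [DecidableEq n]

theorem algebraMap_real_eq_smul_one (c : ℝ) :
    algebraMap ℝ (Matrix n n 𝕜) c = (c : 𝕜) • 1 := by
  rw [algebraMap_eq_diagonal, smul_one_eq_diagonal]
  rfl

open scoped MatrixOrder

theorem PosSemidef.trace_mul_nonneg {A B : Matrix n n 𝕜} (hA : A.PosSemidef)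
    (hB : B.PosSemidef) : 0 ≤ (A * B).trace := by
  obtain ⟨C, rfl⟩ := CStarAlgebra.nonneg_iff_eq_star_mul_self.mp hA.nonneg
  rw [Matrix.mul_assoc, trace_mul_comm, star_eq_conjTranspose]
  exact (hB.mul_mul_conjTranspose_same C).trace_nonneg

theorem IsHermitian.posSemidef_smul_one_sub {A : Matrix n n 𝕜} (hA : A.IsHermitian) {c : ℝ}
    (h : ∀ i, hA.eigenvalues i ≤ c) : ((c : 𝕜) • 1 - A).PosSemidef := by
  rw [← algebraMap_real_eq_smul_one, ← le_iff,
    le_algebraMap_iff_spectrum_le (ha := hA.isSelfAdjoint), hA.spectrum_real_eq_range_eigenvalues]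
  rintro - ⟨i, rfl⟩
  exact h i

theorem IsHermitian.posSemidef_sub_smul_one {A : Matrix n n 𝕜} (hA : A.IsHermitian) {c : ℝ}
    (h : ∀ i, c ≤ hA.eigenvalues i) : (A - (c : 𝕜) • 1).PosSemidef := by
  rw [← algebraMap_real_eq_smul_one, ← le_iff,
    algebraMap_le_iff_le_spectrum (ha := hA.isSelfAdjoint), hA.spectrum_real_eq_range_eigenvalues]
  rintro - ⟨i, rfl⟩
  exact h i

theorem IsHermitian.trace_cfcAbs {A : Matrix n n 𝕜} (hA : A.IsHermitian) :
    (CFC.abs A).trace = ∑ i, ((|hA.eigenvalues i| : ℝ) : 𝕜) := by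
  rw [CFC.abs_eq_cfc_norm A hA.isSelfAdjoint, hA.cfc_eq, IsHermitian.cfc,
    Unitary.conjStarAlgAut_apply, trace_mul_cycle, Unitary.coe_star_mul_self, one_mul,
    trace_diagonal]
  simp [Real.norm_eq_abs]

theorem cfcAbs_eq_add_of_eq_sub {A B C : Matrix n n 𝕜} (hABC : A = B - C) (hBC : B * C = 0)
    (hB : B.PosSemidef) (hC : C.PosSemidef) : CFC.abs A = B + C := by
  obtain ⟨hpos, hneg⟩ := CFC.posPart_negPart_unique hABC hBC hB.nonneg hC.nonneg
  rw [← CFC.posPart_add_negPart A (hABC ▸ (hB.isHermitian.sub hC.isHermitian).isSelfAdjoint),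
    hpos, hneg]

end Matrix

section

variable {d : ℕ}

theorem eigenvalues_le_eigMax {M : Matrix (Fin d) (Fin d) ℂ} (hM : M.IsHermitian) (i : Fin d) :
    hM.eigenvalues i ≤ eigMax M := by
  rw [eigMax, dif_pos hM]
  exact le_ciSup (Set.finite_range _).bddAbove i

theorem eigMin_le_eigenvalues {M : Matrix (Fin d) (Fin d) ℂ} (hM : M.IsHermitian) (i : Fin d) :
    eigMin M ≤ hM.eigenvalues i := by
  rw [eigMin, dif_pos hM]
  exact ciInf_le (Set.finite_range _).bddBelow i

theorem reTr_add (A B : Matrix (Fin d) (Fin d) ℂ) : reTr (A + B) = reTr A + reTr B := by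
  simp [reTr]

theorem reTr_sub (A B : Matrix (Fin d) (Fin d) ℂ) : reTr (A - B) = reTr A - reTr B := by
  simp [reTr]

theorem reTr_smul (c : ℝ) (A : Matrix (Fin d) (Fin d) ℂ) : reTr (c • A) = c * reTr A := by
  simp [reTr]

theorem reTr_mul_sub_smul_one (A M : Matrix (Fin d) (Fin d) ℂ) (c : ℝ) :
    reTr (A * (M - (c : ℂ) • 1)) = reTr (A * M) - c * reTr A := by
  simp [reTr, Matrix.mul_sub]

theorem reTr_mul_nonpos {A B : Matrix (Fin d) (Fin d) ℂ} (hA : A.PosSemidef)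
    (hB : (-B).PosSemidef) : reTr (A * B) ≤ 0 := by
  have := (Complex.nonneg_iff.mp (hA.trace_mul_nonneg hB)).1
  rwa [Matrix.mul_neg, trace_neg, Complex.neg_re, neg_nonneg] at this

theorem traceNorm_add_eq_reTr_sub {P N : Matrix (Fin d) (Fin d) ℂ} (hP : P.PosSemidef)
    (hN : (-N).PosSemidef) (hPN : P * N = 0) : traceNorm (P + N) = reTr P - reTr N := by
  have hherm : (P + N).IsHermitian := by
    simpa using hP.isHermitian.sub hN.isHermitian
  have habs := Matrix.cfcAbs_eq_add_of_eq_sub (sub_neg_eq_add P N).symm (by simp [hPN]) hP hN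
  have htr := congrArg Complex.re hherm.trace_cfcAbs
  rw [habs, trace_add, trace_neg] at htr
  rw [traceNorm, dif_pos hherm, reTr, reTr]
  simpa [Complex.re_sum, sub_eq_add_neg] using htr.symm

theorem bound_gap_eq {p : ℝ} {ρ₀ ρ₁ M₀ M₁ P N : Matrix (Fin d) (Fin d) ℂ}
    (htr₀ : ρ₀.trace = 1) (htr₁ : ρ₁.trace = 1) (hsum : M₀ + M₁ = 1)
    (hdecomp : p • ρ₀ - (1 - p) • ρ₁ = P + N) (a b : ℝ) :
    p * reTr (ρ₀ * M₁) + (1 - p) * reTr (ρ₁ * M₀) -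
        (1 / 2 - (1 / 2) * (reTr P - reTr N) * (a - b) - (1 / 2) * (2 * p - 1) * (a + b - 1)) =
      -(reTr (P * (M₀ - (a : ℂ) • 1)) + reTr (N * (M₀ - (b : ℂ) • 1))) := by
  have htr : reTr P + reTr N = 2 * p - 1 := by
    have hρ₀ : reTr ρ₀ = 1 := by simp [reTr, htr₀]
    have hρ₁ : reTr ρ₁ = 1 := by simp [reTr, htr₁]
    have := congrArg reTr hdecomp
    rw [reTr_sub, reTr_add, reTr_smul, reTr_smul, hρ₀, hρ₁] at this
    linarith
  have htrM₀ : reTr (P * M₀) + reTr (N * M₀) =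
      p * reTr (ρ₀ * M₀) - (1 - p) * reTr (ρ₁ * M₀) := by
    simpa only [Matrix.add_mul, Matrix.sub_mul, Matrix.smul_mul, reTr_add, reTr_sub, reTr_smul]
      using (congrArg (reTr <| · * M₀) hdecomp).symm
  have htrM₁ : reTr (ρ₀ * M₁) = 1 - reTr (ρ₀ * M₀) := by
    simp [eq_sub_of_add_eq' hsum, Matrix.mul_sub, reTr, htr₀]
  rw [reTr_mul_sub_smul_one, reTr_mul_sub_smul_one, htrM₁]
  linear_combination htrM₀ - ((a + b) / 2) * htr

end

theorem stmt5_general {d : ℕ} (p : ℝ)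
    (ρ₀ ρ₁ M₀ M₁ P N : Matrix (Fin d) (Fin d) ℂ)
    (htr₀ : ρ₀.trace = 1) (htr₁ : ρ₁.trace = 1)
    (hM₀ : M₀.IsHermitian) (hsum : M₀ + M₁ = 1)
    (hdecomp : p • ρ₀ - (1 - p) • ρ₁ = P + N)
    (hP : P.PosSemidef) (hN : (-N).PosSemidef) (hPN : P * N = 0)
    (heq : p * reTr (ρ₀ * M₁) + (1 - p) * reTr (ρ₁ * M₀) =
      1 / 2 - (1 / 2) * traceNorm (p • ρ₀ - (1 - p) • ρ₁) * (eigMax M₀ - eigMin M₀)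
        - (1 / 2) * (2 * p - 1) * ((eigMax M₀ + eigMin M₀) - 1)) :
    reTr (P * (M₀ - (eigMax M₀ : ℂ) • 1)) = 0 ∧
      reTr (N * (M₀ - (eigMin M₀ : ℂ) • 1)) = 0 := by
  have hupper : reTr (P * (M₀ - (eigMax M₀ : ℂ) • 1)) ≤ 0 := by
    refine reTr_mul_nonpos hP ?_
    rw [neg_sub]
    exact hM₀.posSemidef_smul_one_sub (eigenvalues_le_eigMax hM₀)
  have hlower : reTr (N * (M₀ - (eigMin M₀ : ℂ) • 1)) ≤ 0 := by
    rw [reTr, trace_mul_comm]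
    exact reTr_mul_nonpos (hM₀.posSemidef_sub_smul_one (eigMin_le_eigenvalues hM₀)) hN
  have hnorm : traceNorm (p • ρ₀ - (1 - p) • ρ₁) = reTr P - reTr N :=
    hdecomp ▸ traceNorm_add_eq_reTr_sub hP hN hPN
  have hgap := bound_gap_eq htr₀ htr₁ hsum hdecomp (eigMax M₀) (eigMin M₀)
  rw [← hnorm, heq, sub_self] at hgap
  constructor <;> linarith

/-- Necessity: equality in the general discrimination bound forces
the range of the positive part `P` (resp. the negative part `N ≤ 0`, with
`p ρ₀ - (1-p) ρ₁ = P + N`) of the difference to lie in the `λ_max(M₀)`-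
(resp. `λ_min(M₀)`-) eigenspace of `M₀`, expressed by vanishing traces. -/
theorem stmt5 {d : ℕ} (p : ℝ) (hp0 : 0 ≤ p) (hp1 : p ≤ 1)
    (ρ₀ ρ₁ M₀ M₁ P N : Matrix (Fin d) (Fin d) ℂ)
    (hρ₀ : ρ₀.IsHermitian) (hρ₁ : ρ₁.IsHermitian)
    (htr₀ : ρ₀.trace = 1) (htr₁ : ρ₁.trace = 1)
    (hM₀ : M₀.IsHermitian) (hM₁ : M₁.IsHermitian) (hsum : M₀ + M₁ = 1)
    (hdecomp : p • ρ₀ - (1 - p) • ρ₁ = P + N)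
    (hP : P.PosSemidef) (hN : (-N).PosSemidef) (hPN : P * N = 0)
    (heq : p * reTr (ρ₀ * M₁) + (1 - p) * reTr (ρ₁ * M₀) =
      1 / 2 - (1 / 2) * traceNorm (p • ρ₀ - (1 - p) • ρ₁) * (eigMax M₀ - eigMin M₀)
        - (1 / 2) * (2 * p - 1) * ((eigMax M₀ + eigMin M₀) - 1)) :
    reTr (P * (M₀ - (eigMax M₀ : ℂ) • 1)) = 0 ∧
      reTr (N * (M₀ - (eigMin M₀ : ℂ) • 1)) = 0 :=
  stmt5_general p ρ₀ ρ₁ M₀ M₁ P N htr₀ htr₁ hM₀ hsum hdecomp hP hN hPN heq
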